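/- If |a| = n, then ∏_{i=1}^{n} L_i(q) = (∏_{k=1}^{n} α_k)/(1 − a^a q) in ℚ_α[[q]], and consequently ∑_{i=1}^{n} L_i′(q)/L_i(q) = a^a/(1 − a^a q), where ′ denotes the formal derivative with respect to q. -/

import Mathlib

/-!
Setting: `Kf n = ℚ_α = ℚ(α₁,…,αₙ)` is the field of rational functions in `n` variables over
`ℚ` (in which the `αᵢ` are pairwise distinct).  For a tuple `a : Fin l → ℤ` of nonzero
integers with `|a| = ∑|a_k| ≤ n` and `a^a = ∏ a_k^{|a_k|}`, the power series
`L_i ∈ ℚ_α[[q]]` is characterized by having constant term `αᵢ` and satisfying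
`∏ₖ(L_i − αₖ) = q·a^a·L_i^{|a|}`.
-/

noncomputable section

namespace SQ

/-- The field `ℚ_α = ℚ(α₁,…,αₙ)`. -/
abbrev Kf (n : ℕ) : Type := FractionRing (MvPolynomial (Fin n) ℚ)

/-- The element `αᵢ ∈ ℚ_α`. -/
def alpha (n : ℕ) (i : Fin n) : Kf n :=
  algebraMap (MvPolynomial (Fin n) ℚ) (Kf n) (MvPolynomial.X i)

/-- `|a| = ∑ |a_k|`. -/
def absSum (l : ℕ) (a : Fin l → ℤ) : ℕ := ∑ k : Fin l, (a k).natAbs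

/-- `a^a = ∏ a_k^{|a_k|}`, as an element of `ℚ_α`. -/
def aPow (n l : ℕ) (a : Fin l → ℤ) : Kf n := ((∏ k : Fin l, a k ^ (a k).natAbs : ℤ) : Kf n)

/-- The defining property of `L_i ∈ ℚ_α[[q]]`: constant term `αᵢ` and
`∏ₖ(L − αₖ) = q·a^a·L^{|a|}`. -/
def IsLSeries (n l : ℕ) (a : Fin l → ℤ) (i : Fin n) (L : PowerSeries (Kf n)) : Prop :=
  PowerSeries.constantCoeff L = alpha n i ∧
    ∏ k : Fin n, (L - PowerSeries.C (alpha n k))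
      = PowerSeries.X * PowerSeries.C (aPow n l a) * L ^ absSum l a

/-- The formal derivative with respect to `q` of a power series. -/
def psDeriv (n : ℕ) (f : PowerSeries (Kf n)) : PowerSeries (Kf n) :=
  PowerSeries.mk fun d => ((d : Kf n) + 1) * PowerSeries.coeff (d + 1) f

end SQ

/-!
When `|a| = n`, every `Lᵢ` is a root of the polynomial `∏ₖ (X - αₖ) - a^a q Xⁿ` over `ℚ_α[[q]]`,
whose `Xⁿ`-coefficient is `1 - a^a q`. The `Lᵢ` are pairwise distinct (their constant terms are), so
this polynomial is `(1 - a^a q) ∏ᵢ (X - Lᵢ)`, and comparing constant terms gives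
`(1 - a^a q) ∏ᵢ Lᵢ = ∏ₖ αₖ`. The second identity is the logarithmic derivative of the first.
-/

namespace Polynomial

variable {R : Type*} [CommRing R] {ι : Type*} [Fintype ι]

theorem eval_zero_prod_X_sub_C (r : ι → R) :
    (∏ i, (X - C (r i))).eval 0 = (-1) ^ Fintype.card ι * ∏ i, r i := by
  simp [eval_prod, Finset.prod_neg]

variable [IsDomain R]

theorem eq_C_coeff_mul_prod_X_sub_C_of_eval_eq_zero {p : R[X]} {r : ι → R}
    (hr : Function.Injective r) (hp : p.natDegree ≤ Fintype.card ι)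
    (hroot : ∀ i, p.eval (r i) = 0) :
    p = C (p.coeff (Fintype.card ι)) * ∏ i, (X - C (r i)) := by
  classical
  set Q : R[X] := ∏ i, (X - C (r i))
  have hQ : Q.Monic := monic_prod_of_monic _ _ fun i _ => monic_X_sub_C (r i)
  have hQdeg : Q.natDegree = Fintype.card ι := by
    simp [Q, natDegree_prod_of_monic _ _ fun i _ => monic_X_sub_C (r i)]
  rw [← sub_eq_zero]
  refine eq_zero_of_degree_lt_of_eval_index_eq_zero (v := r) Finset.univ hr.injOn ?_ fun i _ => ?_
  · rw [Finset.card_univ, degree_lt_iff_coeff_zero]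
    intro m hm
    rcases hm.eq_or_lt with rfl | hm
    · simp [coeff_C_mul, ← hQdeg, hQ.coeff_natDegree]
    · simp [coeff_C_mul, coeff_eq_zero_of_natDegree_lt (hp.trans_lt hm),
        coeff_eq_zero_of_natDegree_lt (hQdeg.trans_lt hm)]
  · simp [hroot i, Q, eval_prod, Finset.prod_eq_zero (Finset.mem_univ i)]

end Polynomial

open Polynomial in
theorem one_sub_mul_prod_eq_prod_of_prod_sub_eq_mul_pow {R : Type*} [CommRing R] [IsDomain R]
    {ι : Type*} [Fintype ι] [Nonempty ι] {α L : ι → R} {q : R} (hL : Function.Injective L)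
    (h : ∀ i, ∏ k, (L i - α k) = q * L i ^ Fintype.card ι) :
    (1 - q) * ∏ i, L i = ∏ k, α k := by
  set p : R[X] := ∏ k, (X - C (α k)) - C q * X ^ Fintype.card ι
  have hM : (∏ k, (X - C (α k))).Monic := monic_prod_of_monic _ _ fun k _ => monic_X_sub_C (α k)
  have hMdeg : (∏ k, (X - C (α k))).natDegree = Fintype.card ι := by
    simp [natDegree_prod_of_monic _ _ fun k _ => monic_X_sub_C (α k)]
  have hpdeg : p.natDegree ≤ Fintype.card ι :=
    (natDegree_sub_le _ _).trans (max_le hMdeg.le (natDegree_C_mul_X_pow_le q _))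
  have hpcoeff : p.coeff (Fintype.card ι) = 1 - q := by
    simp only [p, coeff_sub, coeff_C_mul, coeff_X_pow_self, mul_one]
    rw [← hMdeg, hM.coeff_natDegree]
  have hfactor := eq_C_coeff_mul_prod_X_sub_C_of_eval_eq_zero hL hpdeg fun i => by
    simp only [p, eval_sub, eval_prod, eval_mul, eval_C, eval_pow, eval_X, h i, sub_self]
  have h0 := congrArg (eval 0) hfactor
  simp only [p, hpcoeff, eval_sub, eval_mul, eval_C, eval_pow, eval_X, eval_zero_prod_X_sub_C,
    zero_pow Fintype.card_ne_zero, mul_zero, sub_zero] at h0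
  exact (isUnit_neg_one.pow _).mul_left_cancel (by rw [h0]; ring)

namespace PowerSeries

variable {K : Type*} [Field K]

def logDeriv (f : K⟦X⟧) : K⟦X⟧ := d⁄dX K f * f⁻¹

theorem logDeriv_mul {f g : K⟦X⟧} (hf : constantCoeff f ≠ 0) (hg : constantCoeff g ≠ 0) :
    logDeriv (f * g) = logDeriv f + logDeriv g := by
  have hff := PowerSeries.mul_inv_cancel f hf
  have hgg := PowerSeries.mul_inv_cancel g hg
  simp only [logDeriv, Derivation.leibniz, smul_eq_mul, PowerSeries.mul_inv_rev]
  linear_combination (d⁄dX K g * g⁻¹) * hff + (d⁄dX K f * f⁻¹) * hgg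

theorem logDeriv_prod {ι : Type*} (s : Finset ι) (f : ι → K⟦X⟧)
    (h : ∀ i ∈ s, constantCoeff (f i) ≠ 0) :
    logDeriv (∏ i ∈ s, f i) = ∑ i ∈ s, logDeriv (f i) := by
  induction s using Finset.cons_induction with
  | empty => simp [logDeriv]
  | cons a s ha ih =>
    have hs : ∀ i ∈ s, constantCoeff (f i) ≠ 0 := fun i hi => h i (Finset.mem_cons_of_mem hi)
    rw [Finset.prod_cons, Finset.sum_cons, logDeriv_mul (h a (Finset.mem_cons_self a s))
      (by rw [map_prod]; exact Finset.prod_ne_zero_iff.2 hs), ih hs]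

@[simp] theorem logDeriv_C (c : K) : logDeriv (C c) = 0 := by simp [logDeriv]

theorem logDeriv_one_sub_C_mul_X (c : K) :
    logDeriv (1 - C c * X) = -C c * (1 - C c * X)⁻¹ := by
  simp [logDeriv]

end PowerSeries

namespace SQ

open PowerSeries

lemma alpha_injective (n : ℕ) : Function.Injective (alpha n) := fun _ _ h =>
  MvPolynomial.X_injective (IsFractionRing.injective (MvPolynomial (Fin n) ℚ) (Kf n) h)

lemma alpha_ne_zero (n : ℕ) (i : Fin n) : alpha n i ≠ 0 :=
  (map_ne_zero_iff _ (IsFractionRing.injective (MvPolynomial (Fin n) ℚ) (Kf n))).2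
    (MvPolynomial.X_ne_zero i)

lemma psDeriv_eq_derivative (n : ℕ) (f : (Kf n)⟦X⟧) : psDeriv n f = d⁄dX (Kf n) f := by
  ext d
  simp only [psDeriv, coeff_mk, coeff_derivative]
  ring

lemma IsLSeries.injective {n l : ℕ} {a : Fin l → ℤ} {L : Fin n → (Kf n)⟦X⟧}
    (hL : ∀ i, IsLSeries n l a i (L i)) : Function.Injective L := fun i j hij =>
  alpha_injective n <| by rw [← (hL i).1, ← (hL j).1, hij]

theorem statement16_general (n l : ℕ) (hn : 1 ≤ n) (a : Fin l → ℤ)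
    (L : Fin n → PowerSeries (Kf n)) (hL : ∀ i : Fin n, IsLSeries n l a i (L i))
    (hmn : absSum l a = n) :
    ∏ i : Fin n, L i
        = PowerSeries.C (∏ k : Fin n, alpha n k)
            * (1 - PowerSeries.C (aPow n l a) * PowerSeries.X)⁻¹ ∧
    ∑ i : Fin n, psDeriv n (L i) * (L i)⁻¹
        = PowerSeries.C (aPow n l a)
            * (1 - PowerSeries.C (aPow n l a) * PowerSeries.X)⁻¹ := by
  have : Nonempty (Fin n) := ⟨⟨0, hn⟩⟩
  set u : (Kf n)⟦X⟧ := 1 - C (aPow n l a) * X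
  have hu : constantCoeff u ≠ 0 := by simp [u]
  have hprod : u * ∏ i, L i = C (∏ k, alpha n k) := by
    rw [map_prod]
    refine one_sub_mul_prod_eq_prod_of_prod_sub_eq_mul_pow (IsLSeries.injective hL) fun i => ?_
    rw [(hL i).2, hmn, Fintype.card_fin]
    ring
  have hL0 : ∀ i ∈ Finset.univ, constantCoeff (L i) ≠ 0 := fun i _ =>
    (hL i).1 ▸ alpha_ne_zero n i
  have hlog : logDeriv u + logDeriv (∏ i, L i) = 0 := by
    rw [← logDeriv_mul hu (by rw [map_prod]; exact Finset.prod_ne_zero_iff.2 hL0), hprod,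
      logDeriv_C]
  refine ⟨by rw [eq_mul_inv_iff_mul_eq hu, mul_comm, hprod], ?_⟩
  calc ∑ i, psDeriv n (L i) * (L i)⁻¹ = logDeriv (∏ i, L i) := by
        rw [logDeriv_prod _ _ hL0]
        simp only [psDeriv_eq_derivative, PowerSeries.logDeriv]
    _ = -logDeriv u := eq_neg_of_add_eq_zero_right hlog
    _ = C (aPow n l a) * u⁻¹ := by rw [logDeriv_one_sub_C_mul_X, neg_mul, neg_neg]

/-- if `|a| = n`, then `∏ᵢ L_i(q) = (∏ₖ αₖ)/(1 − a^a q)` in `ℚ_α[[q]]`, and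
consequently `∑ᵢ L_i′(q)/L_i(q) = a^a/(1 − a^a q)`. -/
theorem statement16 (n l : ℕ) (hn : 1 ≤ n) (a : Fin l → ℤ) (ha : ∀ k, a k ≠ 0)
    (hm : absSum l a ≤ n)
    (L : Fin n → PowerSeries (Kf n)) (hL : ∀ i : Fin n, IsLSeries n l a i (L i))
    (hmn : absSum l a = n) :
    ∏ i : Fin n, L i
        = PowerSeries.C (∏ k : Fin n, alpha n k)
            * (1 - PowerSeries.C (aPow n l a) * PowerSeries.X)⁻¹ ∧
    ∑ i : Fin n, psDeriv n (L i) * (L i)⁻¹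
        = PowerSeries.C (aPow n l a)
            * (1 - PowerSeries.C (aPow n l a) * PowerSeries.X)⁻¹ :=
  statement16_general n l hn a L hL hmn

end SQ
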